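/- For dim V = 3, there exist a self-adjoint operator B and a skew-adjoint operator C with {I, B, C} linearly independent such that {R^S_I, R^S_B, R^Λ_C} is linearly dependent: take B with eigenvalues 2, 2, 1/2 in an orthonormal basis and C with C e_1 = −e_2, C e_2 = e_1, C e_3 = 0; then R^S_I + R^S_B − R^Λ_C = 0. -/

import Mathlib

open RealInnerProductSpace

noncomputable def RS3 (A : EuclideanSpace ℝ (Fin 3) →ₗ[ℝ] EuclideanSpace ℝ (Fin 3))
    (x y z w : EuclideanSpace ℝ (Fin 3)) : ℝ :=
  ⟪A x, w⟫ * ⟪A y, z⟫ - ⟪A x, z⟫ * ⟪A y, w⟫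

noncomputable def RL3 (A : EuclideanSpace ℝ (Fin 3) →ₗ[ℝ] EuclideanSpace ℝ (Fin 3))
    (x y z w : EuclideanSpace ℝ (Fin 3)) : ℝ :=
  RS3 A x y z w - 2 * ⟪A x, y⟫ * ⟪A z, w⟫

/-!
On the `e₁e₂`-plane `R^Λ_C` has sectional curvature `3` and it vanishes on every plane
containing `e₃`, while a diagonal `B` contributes the products `λᵢλⱼ` of its eigenvalues to
`R^S_B`. Hence the identity `R^S_I + R^S_B = R^Λ_C` forces `λ₁λ₂ = 2` and `λ₁λ₃ = λ₂λ₃ = -1`,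
i.e. `B = ±√2 • diag(1, 1, -1/2)`. Since `R^S` is quadratic in the operator, the identity reduces
to the polynomial identity `R^S_I + 2 R^S_D = R^Λ_C` for `D = diag(1, 1, -1/2)`.
-/

open Matrix

lemma inner_toEuclideanLin_apply {n : Type*} [Fintype n] [DecidableEq n] (M : Matrix n n ℝ)
    (x y : EuclideanSpace ℝ n) : ⟪toEuclideanLin M x, y⟫ = ∑ i, ∑ j, M i j * x j * y i := by
  simp [PiLp.inner_apply, toLpLin_apply, mulVec, dotProduct, Finset.mul_sum, mul_comm]

lemma RS3_smul (c : ℝ) (A : EuclideanSpace ℝ (Fin 3) →ₗ[ℝ] EuclideanSpace ℝ (Fin 3))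
    (x y z w : EuclideanSpace ℝ (Fin 3)) : RS3 (c • A) x y z w = c ^ 2 * RS3 A x y z w := by
  simp only [RS3, LinearMap.smul_apply, inner_smul_left, conj_trivial]
  ring

namespace CurvatureDependence

noncomputable def D : Matrix (Fin 3) (Fin 3) ℝ := diagonal ![1, 1, -1 / 2]

def J : Matrix (Fin 3) (Fin 3) ℝ := !![0, 1, 0; -1, 0, 0; 0, 0, 0]

lemma conjTranspose_smul_D (c : ℝ) : (c • D)ᴴ = c • D := by
  simp [D]

lemma conjTranspose_J : Jᴴ = -J := by
  ext i j
  fin_cases i <;> fin_cases j <;> simp [J]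

lemma RS3_id_add_two_mul_RS3_D (x y z w : EuclideanSpace ℝ (Fin 3)) :
    RS3 LinearMap.id x y z w + 2 * RS3 (toEuclideanLin D) x y z w
      = RL3 (toEuclideanLin J) x y z w := by
  simp only [RS3, RL3, LinearMap.id_apply, inner_toEuclideanLin_apply]
  simp [Fin.sum_univ_three, D, J, PiLp.inner_apply]
  ring

lemma eq_zero_of_smul_one_add_smul_D_add_smul_J {a b c : ℝ}
    (h : a • (1 : Matrix (Fin 3) (Fin 3) ℝ) + b • (√2 • D) + c • J = 0) :
    a = 0 ∧ b = 0 ∧ c = 0 := by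
  have h00 := congrFun (congrFun h 0) 0
  have h22 := congrFun (congrFun h 2) 2
  have h01 := congrFun (congrFun h 0) 1
  simp [D, J] at h00 h22 h01
  have hb : b = 0 := by
    have hb_sqrt : b * √2 = 0 := by linarith
    simpa using hb_sqrt
  exact ⟨by simpa [hb] using h00, hb, h01⟩

end CurvatureDependence

open CurvatureDependence in
theorem stmt_19 :
    ∃ B C : EuclideanSpace ℝ (Fin 3) →ₗ[ℝ] EuclideanSpace ℝ (Fin 3),
      LinearMap.adjoint B = B ∧ LinearMap.adjoint C = -C ∧
      (∀ a b c : ℝ,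
        a • (LinearMap.id : EuclideanSpace ℝ (Fin 3) →ₗ[ℝ] EuclideanSpace ℝ (Fin 3))
          + b • B + c • C = 0 → a = 0 ∧ b = 0 ∧ c = 0) ∧
      (∀ x y z w : EuclideanSpace ℝ (Fin 3),
        RS3 (LinearMap.id) x y z w + RS3 B x y z w - RL3 C x y z w = 0) := by
  refine ⟨toEuclideanLin (√2 • D), toEuclideanLin J, ?_, ?_, ?_, ?_⟩
  · rw [← toEuclideanLin_conjTranspose_eq_adjoint, conjTranspose_smul_D]
  · rw [← toEuclideanLin_conjTranspose_eq_adjoint, conjTranspose_J, map_neg]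
  · intro a b c h
    apply eq_zero_of_smul_one_add_smul_D_add_smul_J
    apply toEuclideanLin.injective
    simpa [toLpLin_one] using h
  · intro x y z w
    rw [map_smul, RS3_smul, Real.sq_sqrt zero_le_two, ← RS3_id_add_two_mul_RS3_D]
    ring
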